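/- arXiv:2603.26538 — 7 statements merged into one kernel-verified Lean document; each statement's English description precedes it below -/
import Mathlib

section
/- Let G=(V,E) be an st-DAG and let V' ⊆ V be such that the induced subgraph G' of V' is a cluster, with A its set of entry vertices and B its set of exit vertices. Then the set X of all edges of E whose end vertex lies in A is a Fullsyncpoint or a Forward-Halfsyncpoint of G, and the set Y of all edges of E whose start vertex lies in B is a Fullsyncpoint or a Backward-Halfsyncpoint of G. -/
open Set

variable {V : Type*}

/-- Predecessor set of a vertex. -/
def preds (E : Set (V × V)) (v : V) : Set V := {u | (u, v) ∈ E}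

/-- Successor set of a vertex. -/
def succs (E : Set (V × V)) (u : V) : Set V := {w | (u, w) ∈ E}

/-- A digraph is acyclic: no vertex lies on a nonempty directed cycle. -/
def IsAcyclicDigraph (E : Set (V × V)) : Prop :=
  ∀ v : V, ¬ Relation.TransGen (fun a b => (a, b) ∈ E) v v

/-- `s` is the unique vertex with no incoming edge. -/
def IsSourceOf (E : Set (V × V)) (s : V) : Prop :=
  preds E s = ∅ ∧ ∀ v, preds E v = ∅ → v = s

/-- `t` is the unique vertex with no outgoing edge. -/
def IsTargetOf (E : Set (V × V)) (t : V) : Prop :=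
  succs E t = ∅ ∧ ∀ v, succs E v = ∅ → v = t

/-- A set of in-twins: all elements have the identical set of predecessors. -/
def InTwins (E : Set (V × V)) (S : Set V) : Prop :=
  ∀ v ∈ S, ∀ w ∈ S, preds E v = preds E w

/-- A set of out-twins: all elements have the identical set of successors. -/
def OutTwins (E : Set (V × V)) (P : Set V) : Prop :=
  ∀ u ∈ P, ∀ w ∈ P, succs E u = succs E w

/-- `P_X`: the set of start vertices of the edges of `X`. -/
def startSet (X : Set (V × V)) : Set V := {u | ∃ v, (u, v) ∈ X}

/-- `S_X`: the set of end vertices of the edges of `X`. -/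
def endSet (X : Set (V × V)) : Set V := {v | ∃ u, (u, v) ∈ X}

/-- Condition (a) of the syncpoint definition. -/
def CondA (E X : Set (V × V)) : Prop :=
  (∀ u ∈ startSet X, ∀ v ∈ endSet X, (u, v) ∈ E → (u, v) ∈ X) ∧
  ((endSet X).ncard = 1 ∨ InTwins E (endSet X)) ∧
  (∀ v ∈ endSet X, preds E v = startSet X)

/-- Condition (b) of the syncpoint definition. -/
def CondB (E X : Set (V × V)) : Prop :=
  (∀ u ∈ startSet X, ∀ v ∈ endSet X, (u, v) ∈ E → (u, v) ∈ X) ∧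
  ((startSet X).ncard = 1 ∨ OutTwins E (startSet X)) ∧
  (∀ u ∈ startSet X, succs E u = endSet X)

/-- Fullsyncpoint: a nonempty edge set satisfying both (a) and (b). -/
def IsFSP (E X : Set (V × V)) : Prop :=
  X.Nonempty ∧ X ⊆ E ∧ CondA E X ∧ CondB E X

/-- Forward-Halfsyncpoint: (a) holds and `|S_X| ≥ 2`. -/
def IsFHSP (E X : Set (V × V)) : Prop :=
  X.Nonempty ∧ X ⊆ E ∧ CondA E X ∧ 2 ≤ (endSet X).ncard

/-- Backward-Halfsyncpoint: (b) holds and `|P_X| ≥ 2`. -/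
def IsBHSP (E X : Set (V × V)) : Prop :=
  X.Nonempty ∧ X ⊆ E ∧ CondB E X ∧ 2 ≤ (startSet X).ncard

/-- A syncpoint is an FSP, FHSP or BHSP. -/
def IsSyncpoint (E X : Set (V × V)) : Prop :=
  IsFSP E X ∨ IsFHSP E X ∨ IsBHSP E X

/-- Maximum Syncpoint: a syncpoint that is not a proper subset of another syncpoint. -/
def IsMSP (E X : Set (V × V)) : Prop :=
  IsSyncpoint E X ∧ ∀ Y, IsSyncpoint E Y → ¬ X ⊂ Y

/-- An edge-path: a nonempty list of edges, consecutive edges sharing endpoints. -/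
def IsEdgePath (E : Set (V × V)) (p : List (V × V)) : Prop :=
  p ≠ [] ∧ (∀ e ∈ p, e ∈ E) ∧ p.Chain' (fun e f => e.2 = f.1)

/-- The vertex-path of an edge-path. -/
def vertexPath (p : List (V × V)) : List V :=
  match p with
  | [] => []
  | e :: rest => e.1 :: (e :: rest).map Prod.snd

/-- An st-path: an edge-path starting at `s` and ending at `t`. -/
def IsStPath (E : Set (V × V)) (s t : V) (p : List (V × V)) : Prop :=
  IsEdgePath E p ∧ (∃ e, p.head? = some e ∧ e.1 = s) ∧
    (∃ e, p.getLast? = some e ∧ e.2 = t)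

/-- An edge `(u,v) ∈ E` is redundant if there is a directed path from `u` to `v`
not containing the edge `(u,v)`. -/
def IsRedundant (E : Set (V × V)) (e : V × V) : Prop :=
  e ∈ E ∧ ∃ p, IsEdgePath E p ∧ e ∉ p ∧
    (∃ f, p.head? = some f ∧ f.1 = e.1) ∧ (∃ f, p.getLast? = some f ∧ f.2 = e.2)

/-- A graph is redundant-free if it has no redundant edge. -/
def RedundantFree (E : Set (V × V)) : Prop := ∀ e, ¬ IsRedundant E e

/-- Entry vertices of the subgraph induced by `V'` (in an st-DAG with source `s`). -/
def entrySet (E : Set (V × V)) (s : V) (V' : Set V) : Set V :=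
  {v | v ∈ V' ∧ ((∃ u, u ∉ V' ∧ (u, v) ∈ E) ∨ v = s)}

/-- Exit vertices of the subgraph induced by `V'` (in an st-DAG with target `t`). -/
def exitSet (E : Set (V × V)) (t : V) (V' : Set V) : Set V :=
  {v | v ∈ V' ∧ ((∃ w, w ∉ V' ∧ (v, w) ∈ E) ∨ v = t)}

/-- The induced subgraph of `V'` is a cluster. -/
def IsCluster (E : Set (V × V)) (s t : V) (V' : Set V) : Prop :=
  2 ≤ (entrySet E s V').ncard ∧ 2 ≤ (exitSet E t V').ncard ∧
  entrySet E s V' ∩ exitSet E t V' = ∅ ∧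
  InTwins E (entrySet E s V') ∧ OutTwins E (exitSet E t V')


/-! Entry vertices of a cluster are in-twins, so all in-edges of the entry set `A` run from one
common predecessor set onto `A`: that is condition (a). Each entry vertex does have a predecessor,
since there are at least two of them and only the source has none. The exit set is dual. -/

section Syncpoints

variable {E : Set (V × V)} {S : Set V}

def inEdges (E : Set (V × V)) (S : Set V) : Set (V × V) := {e | e ∈ E ∧ e.2 ∈ S}

def outEdges (E : Set (V × V)) (S : Set V) : Set (V × V) := {e | e ∈ E ∧ e.1 ∈ S}

lemma InTwins.preds_nonempty {s : V} (hs : IsSourceOf E s) (hS : InTwins E S)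
    (h2 : 2 ≤ S.ncard) {v : V} (hv : v ∈ S) : (preds E v).Nonempty := by
  by_contra h
  have hsub : S ⊆ {s} := fun w hw => hs.2 w <| by rw [hS w hw v hv, not_nonempty_iff_eq_empty.1 h]
  have := ncard_le_ncard hsub (finite_singleton s)
  rw [ncard_singleton] at this
  omega

lemma OutTwins.succs_nonempty {t : V} (ht : IsTargetOf E t) (hS : OutTwins E S)
    (h2 : 2 ≤ S.ncard) {v : V} (hv : v ∈ S) : (succs E v).Nonempty := by
  by_contra h
  have hsub : S ⊆ {t} := fun w hw => ht.2 w <| by rw [hS w hw v hv, not_nonempty_iff_eq_empty.1 h]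
  have := ncard_le_ncard hsub (finite_singleton t)
  rw [ncard_singleton] at this
  omega

lemma endSet_inEdges (hpred : ∀ v ∈ S, (preds E v).Nonempty) : endSet (inEdges E S) = S :=
  Subset.antisymm (fun _ ⟨_, _, hv⟩ => hv) fun v hv =>
    let ⟨u, hu⟩ := hpred v hv
    ⟨u, hu, hv⟩

lemma startSet_outEdges (hsucc : ∀ u ∈ S, (succs E u).Nonempty) : startSet (outEdges E S) = S :=
  Subset.antisymm (fun _ ⟨_, _, hu⟩ => hu) fun u hu =>
    let ⟨w, hw⟩ := hsucc u hu
    ⟨w, hw, hu⟩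

lemma InTwins.startSet_inEdges (hS : InTwins E S) {v : V} (hv : v ∈ S) :
    startSet (inEdges E S) = preds E v :=
  Subset.antisymm (fun _ ⟨w, hw, hwS⟩ => hS w hwS v hv ▸ hw) fun _ hu => ⟨v, hu, hv⟩

lemma OutTwins.endSet_outEdges (hS : OutTwins E S) {u : V} (hu : u ∈ S) :
    endSet (outEdges E S) = succs E u :=
  Subset.antisymm (fun _ ⟨w, hw, hwS⟩ => hS w hwS u hu ▸ hw) fun _ hv => ⟨u, hv, hu⟩

theorem InTwins.isFHSP_inEdges (hS : InTwins E S) (hpred : ∀ v ∈ S, (preds E v).Nonempty)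
    (h2 : 2 ≤ S.ncard) : IsFHSP E (inEdges E S) := by
  have hend := endSet_inEdges hpred
  obtain ⟨v, hv⟩ := nonempty_of_ncard_ne_zero (by omega : S.ncard ≠ 0)
  obtain ⟨u, hu⟩ := hpred v hv
  refine ⟨⟨(u, v), hu, hv⟩, fun _ he => he.1, ⟨?_, Or.inr (by rwa [hend]), ?_⟩, by rwa [hend]⟩
  · rintro _ _ w ⟨_, _, hw⟩ huw
    exact ⟨huw, hw⟩
  · rw [hend]
    exact fun w hw => (hS.startSet_inEdges hw).symm

theorem OutTwins.isBHSP_outEdges (hS : OutTwins E S) (hsucc : ∀ u ∈ S, (succs E u).Nonempty)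
    (h2 : 2 ≤ S.ncard) : IsBHSP E (outEdges E S) := by
  have hstart := startSet_outEdges hsucc
  obtain ⟨u, hu⟩ := nonempty_of_ncard_ne_zero (by omega : S.ncard ≠ 0)
  obtain ⟨w, hw⟩ := hsucc u hu
  refine ⟨⟨(u, w), hw, hu⟩, fun _ he => he.1, ⟨?_, Or.inr (by rwa [hstart]), ?_⟩, by rwa [hstart]⟩
  · rintro v ⟨_, _, hv⟩ _ _ hvw
    exact ⟨hvw, hv⟩
  · rw [hstart]
    exact fun v hv => (hS.endSet_outEdges hv).symm

end Syncpoints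

theorem cluster_borders_are_syncpoints_general
    {V : Type*} (E : Set (V × V)) (s t : V)
    (hs : IsSourceOf E s) (ht : IsTargetOf E t)
    (V' : Set V) (hclust : IsCluster E s t V') :
    (IsFSP E {e | e ∈ E ∧ e.2 ∈ entrySet E s V'} ∨
      IsFHSP E {e | e ∈ E ∧ e.2 ∈ entrySet E s V'}) ∧
    (IsFSP E {e | e ∈ E ∧ e.1 ∈ exitSet E t V'} ∨
      IsBHSP E {e | e ∈ E ∧ e.1 ∈ exitSet E t V'}) := by
  obtain ⟨hA2, hB2, -, hA, hB⟩ := hclust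
  exact ⟨Or.inr (hA.isFHSP_inEdges (fun _ => hA.preds_nonempty hs hA2) hA2),
    Or.inr (hB.isBHSP_outEdges (fun _ => hB.succs_nonempty ht hB2) hB2)⟩

/-- In an st-DAG, the incoming edges of the entry vertex set of a cluster
form a FSP or FHSP, and the outgoing edges of the exit vertex set form a FSP or BHSP. -/
theorem cluster_borders_are_syncpoints
    {V : Type*} [Fintype V] [Nonempty V] (E : Set (V × V)) (s t : V)
    (hacyc : IsAcyclicDigraph E) (hs : IsSourceOf E s) (ht : IsTargetOf E t)
    (V' : Set V) (hclust : IsCluster E s t V') :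
    (IsFSP E {e | e ∈ E ∧ e.2 ∈ entrySet E s V'} ∨
      IsFHSP E {e | e ∈ E ∧ e.2 ∈ entrySet E s V'}) ∧
    (IsFSP E {e | e ∈ E ∧ e.1 ∈ exitSet E t V'} ∨
      IsBHSP E {e | e ∈ E ∧ e.1 ∈ exitSet E t V'}) :=
  cluster_borders_are_syncpoints_general E s t hs ht V' hclust
end

section
/- Let G=(V,E) be a DAG, let X ⊆ E be a Fullsyncpoint, and let X̂ ⊆ E be any syncpoint (a Fullsyncpoint, Forward-Halfsyncpoint, or Backward-Halfsyncpoint) with X ⊆ X̂. Then X = X̂. In particular, every Fullsyncpoint is a Maximum Syncpoint. -/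
open Set

variable {V : Type*}

/-- A Fullsyncpoint contained in any syncpoint equals it;
in particular every Fullsyncpoint is a Maximum Syncpoint. -/
theorem fsp_is_maximal
    {V : Type*} [Fintype V] [Nonempty V] (E : Set (V × V))
    (hacyc : IsAcyclicDigraph E) (X : Set (V × V)) (hX : IsFSP E X) :
    (∀ Xhat : Set (V × V), IsSyncpoint E Xhat → X ⊆ Xhat → X = Xhat) ∧ IsMSP E X := by
  obtain ⟨hne, hXE, ⟨hA1, hA2, hA3⟩, ⟨hB1, hB2, hB3⟩⟩ := hX
  have key : ∀ Xhat : Set (V × V), IsSyncpoint E Xhat → X ⊆ Xhat → X = Xhat := by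
    intro Y hY hXY
    obtain ⟨⟨u0, v0⟩, he0⟩ := hne
    have hu0 : u0 ∈ startSet X := ⟨v0, he0⟩
    have hv0 : v0 ∈ endSet X := ⟨u0, he0⟩
    -- helper: if CondA holds for Y, conclude
    have fromA : Y ⊆ E → CondA E Y → X = Y := by
      intro hYE ⟨hA1', hA2', hA3'⟩
      have hv0' : v0 ∈ endSet Y := ⟨u0, hXY he0⟩
      have hstart : startSet X = startSet Y := by
        rw [← hA3 v0 hv0, hA3' v0 hv0']
      apply Set.Subset.antisymm hXY
      rintro ⟨u, v⟩ huv
      have hu : u ∈ startSet Y := ⟨v, huv⟩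
      have huX : u ∈ startSet X := hstart ▸ hu
      have hE : (u, v) ∈ E := hYE huv
      have hv : v ∈ endSet X := (hB3 u huX) ▸ (show v ∈ succs E u from hE)
      exact hA1 u huX v hv hE
    have fromB : Y ⊆ E → CondB E Y → X = Y := by
      intro hYE ⟨hB1', hB2', hB3'⟩
      have hu0' : u0 ∈ startSet Y := ⟨v0, hXY he0⟩
      have hend : endSet X = endSet Y := by
        rw [← hB3 u0 hu0, hB3' u0 hu0']
      apply Set.Subset.antisymm hXY
      rintro ⟨u, v⟩ huv
      have hv : v ∈ endSet Y := ⟨u, huv⟩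
      have hvX : v ∈ endSet X := hend ▸ hv
      have hE : (u, v) ∈ E := hYE huv
      have hu : u ∈ startSet X := (hA3 v hvX) ▸ (show u ∈ preds E v from hE)
      exact hA1 u hu v hvX hE
    rcases hY with ⟨_, hYE, hCA, _⟩ | ⟨_, hYE, hCA, _⟩ | ⟨_, hYE, hCB, _⟩
    · exact fromA hYE hCA
    · exact fromA hYE hCA
    · exact fromB hYE hCB
  refine ⟨key, Or.inl ⟨hne, hXE, ⟨hA1, hA2, hA3⟩, ⟨hB1, hB2, hB3⟩⟩, ?_⟩
  intro Y hY hXY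
  exact hXY.2 ((key Y hY hXY.1) ▸ Set.Subset.rfl)
end

section
/- Let G=(V,E) be a redundant-free st-DAG with at least two vertices, with source s and target t. Then the set of all edges of E with start vertex s is a Maximum Syncpoint, and the set of all edges of E with end vertex t is a Maximum Syncpoint. -/
open Set

variable {V : Type*}

/-!
In a finite DAG every vertex is reachable from the unique source `s`. If `(s, v)` is an edge,
then `s` is the only predecessor of `v`: a second predecessor `u` would give a path `s ⇝ u → v`,
and acyclicity forces that path to avoid the edge `(s, v)`, which is then redundant. So the edges
out of `s` form a fullsyncpoint with start set `{s}`. A syncpoint that also contains an edge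
`(u, x)` with `u ≠ s` violates condition (a) at a successor of `s` (which would acquire `u` as a
predecessor) and condition (b) at `u` (whose successor `x` would become a successor of `s`).
The edges into `t` are the edges out of `t` in the reversed graph, where the same argument applies.
-/

open Relation

section Reachability

variable {α : Type*} {r : α → α → Prop}

theorem wellFounded_of_forall_not_transGen_self [Finite α] (h : ∀ a, ¬ TransGen r a a) :
    WellFounded r :=
  have : Std.Irrefl (TransGen r) := ⟨h⟩
  Subrelation.wf TransGen.single (Finite.wellFounded_of_trans_of_irrefl (TransGen r))

theorem reflTransGen_of_forall_ne_exists_rel (hwf : WellFounded r) {s : α}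
    (h : ∀ v, v ≠ s → ∃ u, r u v) (v : α) : ReflTransGen r s v := by
  induction v using hwf.induction with
  | _ v ih =>
    by_cases hv : v = s
    · exact hv ▸ ReflTransGen.refl
    · obtain ⟨u, hu⟩ := h v hv
      exact (ih u hu).tail hu

theorem Relation.ReflTransGen.restrict_between {a b : α} (h : ReflTransGen r a b) :
    ReflTransGen (fun x y => r x y ∧ ReflTransGen r a x ∧ ReflTransGen r y b) a b := by
  induction h with
  | refl => exact ReflTransGen.refl
  | tail hac hcd ih =>
    refine .tail (ReflTransGen.mono ?_ _ _ ih) ⟨hcd, hac, ReflTransGen.refl⟩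
    exact fun x y ⟨hxy, hax, hyc⟩ => ⟨hxy, hax, hyc.tail hcd⟩

end Reachability

section Redundancy

variable {E : Set (V × V)}

theorem exists_edgePath_of_transGen {a b : V} (h : TransGen (fun x y => (x, y) ∈ E) a b) :
    ∃ p, IsEdgePath E p ∧ (∃ f, p.head? = some f ∧ f.1 = a) ∧
      (∃ f, p.getLast? = some f ∧ f.2 = b) := by
  induction h using TransGen.head_induction_on with
  | single hab => exact ⟨[(_, b)], ⟨by simp, by simpa using hab, .singleton _⟩, ⟨_, rfl, rfl⟩,
      ⟨_, rfl, rfl⟩⟩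
  | @head x y hxy _ ih =>
    obtain ⟨p, ⟨hne, hE, hchain⟩, ⟨f, hf, hfc⟩, ⟨g, hg, hgb⟩⟩ := ih
    refine ⟨(x, y) :: p, ⟨List.cons_ne_nil _ _, ?_, ?_⟩, ⟨_, rfl, rfl⟩, ⟨g, ?_, hgb⟩⟩
    · simpa [hxy] using hE
    · refine List.isChain_cons.mpr ⟨fun z hz => ?_, hchain⟩
      rw [hf, Option.mem_some_iff] at hz
      exact hz ▸ hfc.symm
    · obtain ⟨f', q, rfl⟩ := List.exists_cons_of_ne_nil hne
      rwa [List.getLast?_cons_cons]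

theorem isRedundant_of_transGen_sdiff {a b : V} (hab : (a, b) ∈ E)
    (h : TransGen (fun x y => (x, y) ∈ E \ {(a, b)}) a b) : IsRedundant E (a, b) := by
  obtain ⟨p, ⟨hne, hF, hchain⟩, hhead, hlast⟩ := exists_edgePath_of_transGen h
  exact ⟨hab, p, ⟨hne, fun e he => (hF e he).1, hchain⟩, fun he => (hF _ he).2 rfl, hhead, hlast⟩

theorem RedundantFree.eq_of_reflTransGen (hred : RedundantFree E) (hacyc : IsAcyclicDigraph E)
    {a b x y : V} (hab : (a, b) ∈ E) (hxy : (x, y) ∈ E)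
    (hax : ReflTransGen (fun u v => (u, v) ∈ E) a x)
    (hyb : ReflTransGen (fun u v => (u, v) ∈ E) y b) : (x, y) = (a, b) := by
  by_contra hne
  have hax' : ReflTransGen (fun u v => (u, v) ∈ E \ {(a, b)}) a x :=
    ReflTransGen.mono (fun p q ⟨hpq, _, hqx⟩ => ⟨hpq, fun h => by
      obtain ⟨-, rfl⟩ := Prod.mk.inj h
      exact hacyc q ((TransGen.tail' hqx hxy).trans_left hyb)⟩) _ _ hax.restrict_between
  have hyb' : ReflTransGen (fun u v => (u, v) ∈ E \ {(a, b)}) y b :=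
    ReflTransGen.mono (fun p q ⟨hpq, hyp, _⟩ => ⟨hpq, fun h => by
      obtain ⟨rfl, -⟩ := Prod.mk.inj h
      exact hacyc y (TransGen.tail' (hyp.trans hax) hxy)⟩) _ _ hyb.restrict_between
  exact hred (a, b) (isRedundant_of_transGen_sdiff hab
    ((TransGen.tail' hax' ⟨hxy, hne⟩).trans_left hyb'))

theorem RedundantFree.preds_eq_singleton (hred : RedundantFree E) (hacyc : IsAcyclicDigraph E)
    {s v : V} (hreach : ∀ u, ReflTransGen (fun a b => (a, b) ∈ E) s u) (hsv : (s, v) ∈ E) :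
    preds E v = {s} := by
  ext u
  refine ⟨fun huv => ?_, by rintro rfl; exact hsv⟩
  exact (Prod.mk.inj (hred.eq_of_reflTransGen hacyc hsv huv (hreach u) .refl)).1

theorem RedundantFree.succs_eq_singleton (hred : RedundantFree E) (hacyc : IsAcyclicDigraph E)
    {u t : V} (hreach : ∀ w, ReflTransGen (fun a b => (a, b) ∈ E) w t) (hut : (u, t) ∈ E) :
    succs E u = {t} := by
  ext w
  refine ⟨fun huw => ?_, by rintro rfl; exact hut⟩
  exact (Prod.mk.inj (hred.eq_of_reflTransGen hacyc hut huw .refl (hreach w))).2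

theorem IsSourceOf.reflTransGen [Finite V] {s : V} (hacyc : IsAcyclicDigraph E)
    (hs : IsSourceOf E s) (v : V) : ReflTransGen (fun a b => (a, b) ∈ E) s v :=
  reflTransGen_of_forall_ne_exists_rel (wellFounded_of_forall_not_transGen_self hacyc)
    (fun v hv => nonempty_iff_ne_empty.mpr (mt (hs.2 v) hv)) v

theorem IsTargetOf.reflTransGen [Finite V] {t : V} (hacyc : IsAcyclicDigraph E)
    (ht : IsTargetOf E t) (v : V) : ReflTransGen (fun a b => (a, b) ∈ E) v t :=
  reflTransGen_swap.mp <| reflTransGen_of_forall_ne_exists_rel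
    (wellFounded_of_forall_not_transGen_self fun a h => hacyc a (transGen_swap.mp h))
    (fun v hv => nonempty_iff_ne_empty.mpr (mt (ht.2 v) hv)) v

end Redundancy

section Syncpoint

variable {E X Y : Set (V × V)}

theorem IsSyncpoint.subset (h : IsSyncpoint E Y) : Y ⊆ E := by
  rcases h with ⟨-, h, -⟩ | ⟨-, h, -⟩ | ⟨-, h, -⟩ <;> exact h

theorem IsSyncpoint.condA_or_condB (h : IsSyncpoint E Y) : CondA E Y ∨ CondB E Y := by
  rcases h with ⟨-, -, h, -⟩ | ⟨-, -, h, -⟩ | ⟨-, -, h, -⟩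
  exacts [Or.inl h, Or.inl h, Or.inr h]

theorem isFSP_edges_from {s : V} (hne : (succs E s).Nonempty)
    (hpred : ∀ v ∈ succs E s, preds E v = {s}) : IsFSP E {e | e ∈ E ∧ e.1 = s} := by
  obtain ⟨w, hw⟩ := hne
  have hstart : startSet {e | e ∈ E ∧ e.1 = s} = {s} :=
    Subset.antisymm (fun u ⟨_, _, hu⟩ => hu) (fun u hu => ⟨w, hu ▸ hw, hu⟩)
  have hend : endSet {e | e ∈ E ∧ e.1 = s} = succs E s :=
    Subset.antisymm (fun v ⟨_, hv, hu⟩ => hu ▸ hv) (fun v hv => ⟨s, hv, rfl⟩)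
  have hall : ∀ u ∈ startSet {e | e ∈ E ∧ e.1 = s}, ∀ v ∈ endSet {e | e ∈ E ∧ e.1 = s},
      (u, v) ∈ E → (u, v) ∈ {e | e ∈ E ∧ e.1 = s} :=
    fun u hu _ _ huv => ⟨huv, eq_of_mem_singleton (hstart ▸ hu)⟩
  refine ⟨⟨(s, w), hw, rfl⟩, fun e he => he.1, ⟨hall, Or.inr ?_, ?_⟩, ⟨hall, Or.inl ?_, ?_⟩⟩
  · intro v hv v' hv'
    rw [hend] at hv hv'
    rw [hpred v hv, hpred v' hv']
  · intro v hv
    rw [hend] at hv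
    rw [hpred v hv, hstart]
  · rw [hstart, ncard_singleton]
  · intro u hu
    rw [hstart, mem_singleton_iff] at hu
    rw [hu, hend]

theorem isMSP_edges_from {s : V} (hne : (succs E s).Nonempty)
    (hpred : ∀ v ∈ succs E s, preds E v = {s}) : IsMSP E {e | e ∈ E ∧ e.1 = s} := by
  refine ⟨Or.inl (isFSP_edges_from hne hpred), fun Y hY hXY => ?_⟩
  obtain ⟨w, hw⟩ := hne
  obtain ⟨⟨u, x⟩, hux, hux_not⟩ := exists_of_ssubset hXY
  have hE : (u, x) ∈ E := hY.subset hux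
  have hus : u ≠ s := fun h => hux_not ⟨hE, h⟩
  have hsw : (s, w) ∈ Y := hXY.subset ⟨hw, rfl⟩
  rcases hY.condA_or_condB with hA | hB
  · have hu : u ∈ preds E w := (hA.2.2 w ⟨s, hsw⟩).symm ▸ ⟨x, hux⟩
    exact hus (eq_of_mem_singleton (hpred w hw ▸ hu))
  · have hx : x ∈ succs E s := ((hB.2.2 s ⟨w, hsw⟩).trans (hB.2.2 u ⟨x, hux⟩).symm).symm ▸ hE
    exact hus (eq_of_mem_singleton (hpred x hx ▸ hE))

theorem startSet_preimage_swap : startSet (Prod.swap ⁻¹' X) = endSet X := rfl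

theorem endSet_preimage_swap : endSet (Prod.swap ⁻¹' X) = startSet X := rfl

theorem condA_preimage_swap : CondA (Prod.swap ⁻¹' E) (Prod.swap ⁻¹' X) ↔ CondB E X :=
  and_congr_left' ⟨fun h u hu v hv => h v hv u hu, fun h u hu v hv => h v hv u hu⟩

theorem condB_preimage_swap : CondB (Prod.swap ⁻¹' E) (Prod.swap ⁻¹' X) ↔ CondA E X :=
  and_congr_left' ⟨fun h u hu v hv => h v hv u hu, fun h u hu v hv => h v hv u hu⟩

theorem nonempty_and_subset_preimage_swap :
    (Prod.swap ⁻¹' Y).Nonempty ∧ Prod.swap ⁻¹' Y ⊆ Prod.swap ⁻¹' E ↔ Y.Nonempty ∧ Y ⊆ E :=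
  and_congr (Prod.swap_surjective.nonempty_preimage)
    Prod.swap_surjective.preimage_subset_preimage_iff

theorem isSyncpoint_preimage_swap :
    IsSyncpoint (Prod.swap ⁻¹' E) (Prod.swap ⁻¹' Y) ↔ IsSyncpoint E Y := by
  simp only [IsSyncpoint, IsFSP, IsFHSP, IsBHSP, ← and_assoc, nonempty_and_subset_preimage_swap,
    condA_preimage_swap, condB_preimage_swap, startSet_preimage_swap, endSet_preimage_swap]
  tauto

theorem IsMSP.of_preimage_swap (h : IsMSP (Prod.swap ⁻¹' E) (Prod.swap ⁻¹' X)) : IsMSP E X :=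
  ⟨isSyncpoint_preimage_swap.mp h.1, fun _ hY hXY =>
    h.2 _ (isSyncpoint_preimage_swap.mpr hY)
      ⟨preimage_mono hXY.1, mt Prod.swap_surjective.preimage_subset_preimage_iff.mp hXY.2⟩⟩

theorem isMSP_edges_to {t : V} (hne : (preds E t).Nonempty)
    (hsucc : ∀ u ∈ preds E t, succs E u = {t}) : IsMSP E {e | e ∈ E ∧ e.2 = t} :=
  IsMSP.of_preimage_swap (isMSP_edges_from (E := Prod.swap ⁻¹' E) hne hsucc)

end Syncpoint

theorem source_target_edges_are_msp_general
    {V : Type*} [Fintype V] (E : Set (V × V)) (s t : V)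
    (hacyc : IsAcyclicDigraph E) (hs : IsSourceOf E s) (ht : IsTargetOf E t)
    (hred : RedundantFree E) (hcard : 2 ≤ Fintype.card V) :
    IsMSP E {e | e ∈ E ∧ e.1 = s} ∧ IsMSP E {e | e ∈ E ∧ e.2 = t} := by
  have hreach_s := hs.reflTransGen hacyc
  have hreach_t := ht.reflTransGen hacyc
  have hst : s ≠ t := by
    rintro rfl
    obtain ⟨v, hv⟩ := Fintype.exists_ne_of_one_lt_card hcard s
    have hsv := (reflTransGen_iff_eq_or_transGen.mp (hreach_s v)).resolve_left hv
    exact hacyc s (hsv.trans_left (hreach_t v))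
  exact ⟨isMSP_edges_from (nonempty_iff_ne_empty.mpr (mt (ht.2 s) hst))
      fun _ => hred.preds_eq_singleton hacyc hreach_s,
    isMSP_edges_to (nonempty_iff_ne_empty.mpr (mt (hs.2 t) hst.symm))
      fun _ => hred.succs_eq_singleton hacyc hreach_t⟩

/-- In a redundant-free st-DAG with at least two vertices, the edges
leaving the source form a Maximum Syncpoint, and likewise the edges entering the target. -/
theorem source_target_edges_are_msp
    {V : Type*} [Fintype V] [Nonempty V] (E : Set (V × V)) (s t : V)
    (hacyc : IsAcyclicDigraph E) (hs : IsSourceOf E s) (ht : IsTargetOf E t)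
    (hred : RedundantFree E) (hcard : 2 ≤ Fintype.card V) :
    IsMSP E {e | e ∈ E ∧ e.1 = s} ∧ IsMSP E {e | e ∈ E ∧ e.2 = t} :=
  source_target_edges_are_msp_general E s t hacyc hs ht hred hcard
end

section
/- For every natural number n ≥ 2, the identity ∑_{k=1}^{n−1} (n−k) · ( ∑_{j=1}^{k} C(k−1, j−1) · j ) = (2n−4) · 2^{n−2} + 1 holds, where C(·,·) denotes the binomial coefficient. -/
open Set

variable {V : Type*}

def innerS (k : ℕ) : ℕ := ∑ j ∈ Finset.Icc 1 k, (k - 1).choose (j - 1) * j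

lemma lem_mul : ∀ t : ℕ, ∑ i ∈ Finset.range (t + 2), (t + 1).choose i * i = (t + 1) * 2 ^ t := by
  intro t
  rw [Finset.sum_range_succ'] -- splits off i = 0
  simp only [Nat.mul_zero, add_zero]
  have h : ∀ i, (t + 1).choose (i + 1) * (i + 1) = (t + 1) * t.choose i := by
    intro i
    rw [← Nat.add_one_mul_choose_eq]
  simp_rw [h]
  rw [← Finset.mul_sum, Nat.sum_range_choose]

lemma inner_eq (m : ℕ) : innerS (m + 2) = (m + 3) * 2 ^ m := by
  unfold innerS
  rw [← Finset.Ico_add_one_right_eq_Icc, Finset.sum_Ico_eq_sum_range]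
  simp only [show m + 2 + 1 - 1 = m + 2 from rfl]
  have h : ∀ i, (m + 2 - 1).choose (1 + i - 1) * (1 + i) = (m + 1).choose i * i + (m + 1).choose i := by
    intro i
    simp [Nat.add_sub_cancel_left, Nat.mul_add, Nat.mul_one, Nat.add_comm 1 i]
  simp_rw [h]
  rw [Finset.sum_add_distrib, lem_mul m, Nat.sum_range_choose]
  ring

lemma inner_one : innerS 1 = 1 := by decide

lemma innerS_sum (m : ℕ) : ∑ k ∈ Finset.Icc 1 (m + 1), innerS k = (m + 1) * 2 ^ m := by
  induction m with
  | zero => simp [inner_one]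
  | succ m ih =>
    rw [Finset.sum_Icc_succ_top (by omega), ih, inner_eq]
    ring

lemma main_aux (m : ℕ) :
    ∑ k ∈ Finset.Icc 1 (m + 1), (m + 2 - k) * innerS k = 2 * m * 2 ^ m + 1 := by
  induction m with
  | zero => simp [inner_one]
  | succ m ih =>
    have step : ∀ k ∈ Finset.Icc 1 (m + 2), (m + 3 - k) * innerS k
        = (m + 2 - k) * innerS k + innerS k := by
      intro k hk
      simp only [Finset.mem_Icc] at hk
      have : m + 3 - k = (m + 2 - k) + 1 := by omega
      rw [this, Nat.add_mul, Nat.one_mul]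
    calc ∑ k ∈ Finset.Icc 1 (m + 1 + 1), (m + 1 + 2 - k) * innerS k
        = ∑ k ∈ Finset.Icc 1 (m + 2), ((m + 2 - k) * innerS k + innerS k) :=
          Finset.sum_congr rfl step
      _ = (∑ k ∈ Finset.Icc 1 (m + 2), (m + 2 - k) * innerS k)
          + ∑ k ∈ Finset.Icc 1 (m + 2), innerS k := Finset.sum_add_distrib
      _ = (∑ k ∈ Finset.Icc 1 (m + 1), (m + 2 - k) * innerS k)
          + ∑ k ∈ Finset.Icc 1 (m + 2), innerS k := by
          rw [Finset.sum_Icc_succ_top (by omega)]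
          simp
      _ = 2 * m * 2 ^ m + 1 + (m + 2) * 2 ^ (m + 1) := by rw [ih, innerS_sum]
      _ = 2 * (m + 1) * 2 ^ (m + 1) + 1 := by ring


/-- For `n ≥ 2`,
`∑_{k=1}^{n-1} (n-k) · (∑_{j=1}^{k} C(k-1, j-1) · j) = (2n-4) · 2^{n-2} + 1`. -/
theorem double_binomial_sum_identity (n : ℕ) (hn : 2 ≤ n) :
    ∑ k ∈ Finset.Icc 1 (n - 1),
        (n - k) * ∑ j ∈ Finset.Icc 1 k, (k - 1).choose (j - 1) * j =
      (2 * n - 4) * 2 ^ (n - 2) + 1 := by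
  obtain ⟨m, rfl⟩ : ∃ m, n = m + 2 := ⟨n - 2, by omega⟩
  have := main_aux m
  simp only [innerS] at this
  have he : m + 2 - 1 = m + 1 := by omega
  have h4 : 2 * (m + 2) - 4 = 2 * m := by omega
  have h2 : m + 2 - 2 = m := by omega
  rw [he, h4, h2]
  exact this
end

section
/- Let G=(V,E) be a directed graph with V finite, let P ⊆ V be a nonempty set of out-twins with common successor set S, S nonempty, and let X be the set of all edges from P to S. Then X is a Fullsyncpoint if and only if (|S| = 1 or S is a set of in-twins) and every v ∈ S has exactly |P| predecessors. (This is the correctness criterion used in line 5 of the MSP-finding algorithm.) -/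
open Set

variable {V : Type*}

/-- Correctness criterion for detecting a FSP from an out-twin class `P`
with common successor set `S`. -/
theorem fsp_detection_criterion
    {V : Type*} [Fintype V] [Nonempty V] (E : Set (V × V)) (P S : Set V)
    (hP : P.Nonempty) (hS : S.Nonempty) (hout : OutTwins E P)
    (hsucc : ∀ u ∈ P, succs E u = S) :
    IsFSP E {e | e ∈ E ∧ e.1 ∈ P ∧ e.2 ∈ S} ↔
      ((S.ncard = 1 ∨ InTwins E S) ∧ ∀ v ∈ S, (preds E v).ncard = P.ncard) := by
  set X : Set (V × V) := {e | e ∈ E ∧ e.1 ∈ P ∧ e.2 ∈ S} with hX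
  have hedge : ∀ u ∈ P, ∀ v ∈ S, (u, v) ∈ E := by
    intro u hu v hv
    have := hsucc u hu
    have : v ∈ succs E u := by rw [this]; exact hv
    exact this
  have hstart : startSet X = P := by
    ext u; constructor
    · rintro ⟨v, hE, hu, hv⟩; exact hu
    · intro hu
      obtain ⟨v, hv⟩ := hS
      exact ⟨v, hedge u hu v hv, hu, hv⟩
  have hend : endSet X = S := by
    ext v; constructor
    · rintro ⟨u, hE, hu, hv⟩; exact hv
    · intro hv
      obtain ⟨u, hu⟩ := hP
      exact ⟨u, hedge u hu v hv, hu, hv⟩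
  constructor
  · rintro ⟨hne, hsub, ⟨ha1, ha2, ha3⟩, hb⟩
    rw [hend] at ha2
    refine ⟨ha2, ?_⟩
    intro v hv
    have := ha3 v (by rw [hend]; exact hv)
    rw [this, hstart]
  · rintro ⟨h1, h2⟩
    have hPfin : P.Finite := Set.toFinite P
    have hpredeq : ∀ v ∈ S, preds E v = P := by
      intro v hv
      have hsubP : P ⊆ preds E v := fun u hu => hedge u hu v hv
      exact (Set.eq_of_subset_of_ncard_le hsubP (le_of_eq (h2 v hv))
        (Set.toFinite _)).symm
    refine ⟨?_, ?_, ⟨?_, ?_, ?_⟩, ⟨?_, ?_, ?_⟩⟩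
    · obtain ⟨u, hu⟩ := hP; obtain ⟨v, hv⟩ := hS
      exact ⟨(u, v), hedge u hu v hv, hu, hv⟩
    · intro e he; exact he.1
    · intro u hu v hv hE
      rw [hstart] at hu; rw [hend] at hv
      exact ⟨hE, hu, hv⟩
    · rw [hend]; exact h1
    · intro v hv; rw [hend] at hv; rw [hpredeq v hv, hstart]
    · intro u hu v hv hE
      rw [hstart] at hu; rw [hend] at hv
      exact ⟨hE, hu, hv⟩
    · rw [hstart]; right; exact hout
    · intro u hu; rw [hstart] at hu; rw [hsucc u hu, hend]
end

section
/- Let G=(V,E) be a directed graph with V finite, let S ⊆ V be a nonempty set, and let P = {u ∈ V | Succ(u) = S} be the full out-twin class with common successor set S; assume |P| ≥ 2. Let X be the set of all edges from P to S. Then X is a Backward-Halfsyncpoint, and X is not a proper subset of any edge set X̂ ⊆ E satisfying condition (b) of the syncpoint definition; in particular X is not a proper subset of any Backward-Halfsyncpoint or Fullsyncpoint. -/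
open Set

variable {V : Type*}

/-- The edges leaving a full out-twin class (of size ≥ 2) with common
successor set `S` form a BHSP which is not a proper subset of any edge set
satisfying condition (b). -/
theorem full_outtwin_class_gives_maximal_bhsp
    {V : Type*} [Fintype V] [Nonempty V] (E : Set (V × V)) (S : Set V)
    (hS : S.Nonempty) (hP : 2 ≤ {u : V | succs E u = S}.ncard) :
    IsBHSP E {e | e ∈ E ∧ e.1 ∈ {u : V | succs E u = S} ∧ e.2 ∈ S} ∧
    ∀ Xhat : Set (V × V), Xhat ⊆ E → Xhat.Nonempty → CondB E Xhat →
      ¬ {e | e ∈ E ∧ e.1 ∈ {u : V | succs E u = S} ∧ e.2 ∈ S} ⊂ Xhat := by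
  set P : Set V := {u : V | succs E u = S} with hPdef
  set X : Set (V × V) := {e | e ∈ E ∧ e.1 ∈ P ∧ e.2 ∈ S} with hXdef
  have hPne : P.Nonempty := by
    rcases (Set.nonempty_of_ncard_ne_zero (by omega) : P.Nonempty) with ⟨p, hp⟩
    exact ⟨p, hp⟩
  obtain ⟨p0, hp0⟩ := hPne
  obtain ⟨s0, hs0⟩ := hS
  have hmem : ∀ u ∈ P, ∀ v ∈ S, (u, v) ∈ E := by
    intro u hu v hv
    have : v ∈ succs E u := by rw [hu]; exact hv
    exact this
  have hXchar : ∀ e : V × V, e ∈ X ↔ e.1 ∈ P ∧ e.2 ∈ S := by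
    intro e
    constructor
    · rintro ⟨_, h1, h2⟩; exact ⟨h1, h2⟩
    · rintro ⟨h1, h2⟩; exact ⟨hmem _ h1 _ h2, h1, h2⟩
  have hstart : startSet X = P := by
    ext u
    constructor
    · rintro ⟨v, hv⟩; exact ((hXchar _).1 hv).1
    · intro hu; exact ⟨s0, (hXchar (u, s0)).2 ⟨hu, hs0⟩⟩
  have hend : endSet X = S := by
    ext v
    constructor
    · rintro ⟨u, hu⟩; exact ((hXchar _).1 hu).2
    · intro hv; exact ⟨p0, (hXchar (p0, v)).2 ⟨hp0, hv⟩⟩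
  have hXE : X ⊆ E := fun e he => he.1
  have hCondB : CondB E X := by
    refine ⟨?_, ?_, ?_⟩
    · intro u hu v hv _
      rw [hstart] at hu; rw [hend] at hv
      exact (hXchar (u, v)).2 ⟨hu, hv⟩
    · right
      intro u hu w hw
      rw [hstart] at hu hw
      rw [hu, hw]
    · intro u hu
      rw [hstart] at hu
      rw [hend]; exact hu
  constructor
  · exact ⟨⟨(p0, s0), (hXchar _).2 ⟨hp0, hs0⟩⟩, hXE, hCondB, by rw [hstart]; exact hP⟩
  · intro Xhat hXhatE hXhatNe hB hsub
    obtain ⟨hclosed, _, hsuccs⟩ := hB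
    have hPsub : P ⊆ startSet Xhat := by
      intro u hu
      have : (u, s0) ∈ Xhat := hsub.1 ((hXchar _).2 ⟨hu, hs0⟩)
      exact ⟨s0, this⟩
    have hendS : endSet Xhat = S := by
      have := hsuccs p0 (hPsub hp0)
      rw [hp0] at this; exact this.symm
    have hstartP : startSet Xhat ⊆ P := by
      intro u hu
      have := hsuccs u hu
      rw [hendS] at this
      exact this
    have : Xhat ⊆ X := by
      rintro ⟨u, v⟩ h
      exact (hXchar _).2 ⟨hstartP ⟨v, h⟩, by rw [← hendS]; exact ⟨u, h⟩⟩
    exact absurd this hsub.2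
end

section
/- Let G=(V,E) be a directed graph with V finite, let P ⊆ V be a nonempty set, and let S = {v ∈ V | Pred(v) = P} be the full in-twin class with common predecessor set P; assume |S| ≥ 2. Let X be the set of all edges from P to S. Then X is a Forward-Halfsyncpoint, and X is not a proper subset of any edge set X̂ ⊆ E satisfying condition (a) of the syncpoint definition; in particular X is not a proper subset of any Forward-Halfsyncpoint or Fullsyncpoint. -/
open Set

variable {V : Type*}

/-- The edges entering a full in-twin class (of size ≥ 2) with common
predecessor set `P` form a FHSP which is not a proper subset of any edge set
satisfying condition (a). -/
theorem full_intwin_class_gives_maximal_fhsp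
    {V : Type*} [Fintype V] [Nonempty V] (E : Set (V × V)) (P : Set V)
    (hP : P.Nonempty) (hS : 2 ≤ {v : V | preds E v = P}.ncard) :
    IsFHSP E {e | e ∈ E ∧ e.1 ∈ P ∧ e.2 ∈ {v : V | preds E v = P}} ∧
    ∀ Xhat : Set (V × V), Xhat ⊆ E → Xhat.Nonempty → CondA E Xhat →
      ¬ {e | e ∈ E ∧ e.1 ∈ P ∧ e.2 ∈ {v : V | preds E v = P}} ⊂ Xhat := by
  set S : Set V := {v : V | preds E v = P} with hSdef
  have hSne : S.Nonempty := Set.nonempty_of_ncard_ne_zero (by omega)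
  set X : Set (V × V) := {e | e ∈ E ∧ e.1 ∈ P ∧ e.2 ∈ S} with hXdef
  have hXE : X ⊆ E := fun e he => he.1
  have hedge : ∀ u ∈ P, ∀ v ∈ S, (u, v) ∈ X := by
    intro u hu v hv
    have : (u, v) ∈ E := by
      have : preds E v = P := hv
      rw [← this] at hu; exact hu
    exact ⟨this, hu, hv⟩
  have hstart : startSet X = P := by
    ext u; constructor
    · rintro ⟨v, hv⟩; exact hv.2.1
    · intro hu; obtain ⟨v, hv⟩ := hSne; exact ⟨v, hedge u hu v hv⟩
  have hend : endSet X = S := by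
    ext v; constructor
    · rintro ⟨u, hu⟩; exact hu.2.2
    · intro hv; obtain ⟨u, hu⟩ := hP; exact ⟨u, hedge u hu v hv⟩
  have hXne : X.Nonempty := by
    obtain ⟨u, hu⟩ := hP; obtain ⟨v, hv⟩ := hSne
    exact ⟨(u, v), hedge u hu v hv⟩
  have hcondA : CondA E X := by
    refine ⟨?_, Or.inr ?_, ?_⟩
    · intro u hu v hv he
      rw [hstart] at hu; rw [hend] at hv
      exact ⟨he, hu, hv⟩
    · intro v hv w hw
      rw [hend] at hv hw
      rw [show preds E v = P from hv, show preds E w = P from hw]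
    · intro v hv; rw [hend] at hv; rw [hstart]; exact hv
  refine ⟨⟨hXne, hXE, hcondA, by rw [hend]; exact hS⟩, ?_⟩
  intro Xhat hXhatE _ hA hss
  obtain ⟨hsub, hne⟩ := ssubset_iff_subset_ne.mp hss
  apply hne
  apply Set.Subset.antisymm hsub
  -- startSet Xhat = P
  obtain ⟨v0, hv0⟩ := hSne
  obtain ⟨u0, hu0⟩ := hP
  have hv0X : (u0, v0) ∈ Xhat := hsub (hedge u0 hu0 v0 hv0)
  have hv0end : v0 ∈ endSet Xhat := ⟨u0, hv0X⟩
  have hPstart : startSet Xhat = P := by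
    rw [← hA.2.2 v0 hv0end]; exact hv0
  intro e he
  have he1 : e.1 ∈ startSet Xhat := ⟨e.2, he⟩
  have he2 : e.2 ∈ endSet Xhat := ⟨e.1, he⟩
  have : preds E e.2 = P := by rw [hA.2.2 e.2 he2, hPstart]
  exact ⟨hXhatE he, by rw [← hPstart]; exact he1, this⟩
end
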